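/- arXiv:gr-qc/0210022 — 3 statements merged into one kernel-verified Lean document; each statement's English description precedes it below -/
import Mathlib

section
/- Let ψ : [t₀,∞) × ℝ → ℝ be C², 2π-periodic in x, satisfy ψ_tt - ψ_xx = -ψ/(4t²), and have zero spatial mean ∫₀^{2π} ψ(t,x) dx = 0 for every t ≥ t₀ > 0. Define the energy ε(t) = (1/2)∫₀^{2π}(ψ_t² + ψ_x²) dx. Then ε'(t) ≤ (π²/t²) ε(t) for all t ≥ t₀. -/
open Real Set

/-- Partial derivative in the first (time) variable. -/
noncomputable def pt (f : ℝ → ℝ → ℝ) : ℝ → ℝ → ℝ := fun t x => deriv (fun s => f s x) t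

/-- Partial derivative in the second (space) variable. -/
noncomputable def px (f : ℝ → ℝ → ℝ) : ℝ → ℝ → ℝ := fun t x => deriv (fun y => f t y) x

/-! Differentiating under the integral sign and integrating by parts in `x` (the boundary terms
cancel by periodicity), the wave equation gives `ε' = -(1 / (4t²)) ∫ ψ_t ψ`, which by AM–GM is at
most `(∫ ψ_t² + ∫ ψ²) / (8t²)`. A mean-zero function vanishes somewhere, so the fundamental theorem
of calculus and Cauchy–Schwarz give the Poincaré inequality `∫ ψ² ≤ 4π² ∫ ψ_x²`; as `1 ≤ 4π²`, the
bound is at most `(π² / t²) ε`. -/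

open Function MeasureTheory intervalIntegral

section PartialDerivatives

variable {f : ℝ → ℝ → ℝ} {t x : ℝ}

theorem hasDerivAt_fderiv_uncurry_fst (hf : DifferentiableAt ℝ (uncurry f) (t, x)) :
    HasDerivAt (fun s => f s x) (fderiv ℝ (uncurry f) (t, x) (1, 0)) t :=
  (hf.hasFDerivAt.comp_hasDerivAt t ((hasDerivAt_id t).prodMk (hasDerivAt_const t x)) :)

theorem hasDerivAt_fderiv_uncurry_snd (hf : DifferentiableAt ℝ (uncurry f) (t, x)) :
    HasDerivAt (f t) (fderiv ℝ (uncurry f) (t, x) (0, 1)) x :=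
  (hf.hasFDerivAt.comp_hasDerivAt x ((hasDerivAt_const x t).prodMk (hasDerivAt_id x)) :)

theorem uncurry_pt_eq_fderiv (hf : Differentiable ℝ (uncurry f)) :
    uncurry (pt f) = fun p => fderiv ℝ (uncurry f) p (1, 0) :=
  funext fun p => (hasDerivAt_fderiv_uncurry_fst (hf p)).deriv

theorem uncurry_px_eq_fderiv (hf : Differentiable ℝ (uncurry f)) :
    uncurry (px f) = fun p => fderiv ℝ (uncurry f) p (0, 1) :=
  funext fun p => (hasDerivAt_fderiv_uncurry_snd (hf p)).deriv

theorem hasDerivAt_pt (hf : Differentiable ℝ (uncurry f)) (t x : ℝ) :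
    HasDerivAt (fun s => f s x) (pt f t x) t :=
  (hasDerivAt_fderiv_uncurry_fst (hf (t, x))).differentiableAt.hasDerivAt

theorem hasDerivAt_px (hf : Differentiable ℝ (uncurry f)) (t x : ℝ) :
    HasDerivAt (f t) (px f t x) x :=
  (hasDerivAt_fderiv_uncurry_snd (hf (t, x))).differentiableAt.hasDerivAt

theorem ContDiff.uncurry_pt {n : WithTop ℕ∞} (hf : ContDiff ℝ (n + 1) (uncurry f)) :
    ContDiff ℝ n (uncurry (pt f)) := by
  rw [uncurry_pt_eq_fderiv (hf.differentiable (by simp))]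
  exact (hf.fderiv_right le_rfl).clm_apply contDiff_const

theorem ContDiff.uncurry_px {n : WithTop ℕ∞} (hf : ContDiff ℝ (n + 1) (uncurry f)) :
    ContDiff ℝ n (uncurry (px f)) := by
  rw [uncurry_px_eq_fderiv (hf.differentiable (by simp))]
  exact (hf.fderiv_right le_rfl).clm_apply contDiff_const

theorem pt_px_eq_px_pt (hf : ContDiff ℝ 2 (uncurry f)) : pt (px f) = px (pt f) := by
  have hf' : ContDiff ℝ (1 + 1) (uncurry f) := hf
  have hD : Differentiable ℝ (fderiv ℝ (uncurry f)) :=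
    (hf'.fderiv_right le_rfl).differentiable one_ne_zero
  have hsecond (p : ℝ × ℝ) (v w : ℝ × ℝ) :
      fderiv ℝ (fun q => fderiv ℝ (uncurry f) q w) p v = fderiv ℝ (fderiv ℝ (uncurry f)) p v w := by
    rw [fderiv_clm_apply (hD p) (differentiableAt_const w)]
    simp
  ext t x
  rw [← uncurry_apply_pair (pt (px f)), ← uncurry_apply_pair (px (pt f)),
    uncurry_pt_eq_fderiv (hf'.uncurry_px.differentiable one_ne_zero),
    uncurry_px_eq_fderiv (hf'.uncurry_pt.differentiable one_ne_zero),
    uncurry_px_eq_fderiv (hf.differentiable two_ne_zero),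
    uncurry_pt_eq_fderiv (hf.differentiable two_ne_zero)]
  dsimp only
  rw [hsecond, hsecond]
  exact (hf.contDiffAt.isSymmSndFDerivAt (by simp)) _ _

end PartialDerivatives

theorem hasDerivAt_intervalIntegral_of_contDiff {F : ℝ → ℝ → ℝ} (hF : ContDiff ℝ 1 (uncurry F))
    (a b t : ℝ) : HasDerivAt (fun s => ∫ x in a..b, F s x) (∫ x in a..b, pt F t x) t := by
  have hF' : Continuous (uncurry (pt F)) := (ContDiff.uncurry_pt (n := 0) hF).continuous
  obtain ⟨C, hC⟩ := ((isCompact_closedBall t 1).prod (isCompact_uIcc (a := a) (b := b)))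
    |>.exists_bound_of_continuousOn hF'.continuousOn
  refine (hasDerivAt_integral_of_dominated_loc_of_deriv_le (bound := fun _ => C)
    (Metric.closedBall_mem_nhds t one_pos)
    (.of_forall fun s => (hF.continuous.comp (Continuous.prodMk_right s)).aestronglyMeasurable)
    ((hF.continuous.comp (Continuous.prodMk_right t)).intervalIntegrable _ _)
    (hF'.comp (Continuous.prodMk_right t)).aestronglyMeasurable
    (.of_forall fun x hx s hs => hC (s, x) ⟨hs, uIoc_subset_uIcc hx⟩)
    intervalIntegrable_const
    (.of_forall fun x _ s _ => hasDerivAt_pt (hF.differentiable one_ne_zero) s x)).2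

theorem Function.Periodic.deriv {g : ℝ → ℝ} {T : ℝ} (hg : Periodic g T) : Periodic (deriv g) T :=
  fun x => by rw [← deriv_comp_add_const, hg.funext]

theorem periodic_pt {f : ℝ → ℝ → ℝ} {T : ℝ} (hf : ∀ t, Periodic (f t) T) (t : ℝ) :
    Periodic (pt f t) T :=
  fun x => by simp only [pt, hf _ x]

theorem integral_mul_deriv_eq_neg_of_periodic {u v u' v' : ℝ → ℝ} {T : ℝ} (hu : Periodic u T)
    (hv : Periodic v T) (hu' : ∀ x, HasDerivAt u (u' x) x) (hv' : ∀ x, HasDerivAt v (v' x) x)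
    (hcu' : Continuous u') (hcv' : Continuous v') :
    ∫ x in 0..T, u x * v' x = -∫ x in 0..T, u' x * v x := by
  rw [integral_mul_deriv_eq_deriv_mul (fun x _ => hu' x) (fun x _ => hv' x)
    (hcu'.intervalIntegrable _ _) (hcv'.intervalIntegrable _ _), hu.eq, hv.eq]
  ring

theorem sq_integral_le_mul_integral_sq {g : ℝ → ℝ} (hg : Continuous g) {a b : ℝ} (hab : a ≤ b) :
    (∫ x in a..b, g x) ^ 2 ≤ (b - a) * ∫ x in a..b, g x ^ 2 := by
  rcases hab.eq_or_lt with rfl | hab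
  · simp
  set S := ∫ x in a..b, g x
  have hL : 0 < b - a := sub_pos.2 hab
  have hpt (x : ℝ) : 2 * S * g x - S ^ 2 / (b - a) ≤ (b - a) * g x ^ 2 := by
    have h : (b - a) * g x ^ 2 - (2 * S * g x - S ^ 2 / (b - a))
        = ((b - a) * g x - S) ^ 2 / (b - a) := by
      field_simp
      ring
    linarith [div_nonneg (sq_nonneg ((b - a) * g x - S)) hL.le]
  have h : ∫ x in a..b, (2 * S * g x - S ^ 2 / (b - a)) ≤ ∫ x in a..b, (b - a) * g x ^ 2 :=
    integral_mono_on hab.le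
      (((continuous_const.mul hg).sub continuous_const).intervalIntegrable _ _)
      ((continuous_const.mul (hg.pow 2)).intervalIntegrable _ _) fun x _ => hpt x
  rw [integral_sub ((hg.intervalIntegrable a b).const_mul (2 * S)) intervalIntegrable_const,
    intervalIntegral.integral_const_mul, intervalIntegral.integral_const_mul,
    intervalIntegral.integral_const, smul_eq_mul, mul_div_cancel₀ _ hL.ne'] at h
  linarith

theorem sq_le_mul_integral_deriv_sq {f f' : ℝ → ℝ} (hf : ∀ x, HasDerivAt f (f' x) x)
    (hf' : Continuous f') {a b x₀ x : ℝ} (hx₀ : x₀ ∈ Icc a b) (hx : x ∈ Icc a b)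
    (hfx₀ : f x₀ = 0) : f x ^ 2 ≤ (b - a) * ∫ y in a..b, f' y ^ 2 := by
  have hab : a ≤ b := hx.1.trans hx.2
  have hfx : f x = ∫ y in x₀..x, f' y := by
    rw [integral_eq_sub_of_hasDerivAt (fun y _ => hf y) (hf'.intervalIntegrable _ _), hfx₀,
      sub_zero]
  have habs : ‖f x‖ ≤ ∫ y in a..b, ‖f' y‖ := by
    rw [hfx, integral_of_le hab]
    refine (norm_integral_le_integral_norm_uIoc ..).trans (setIntegral_mono_set ?_ ?_ ?_)
    · exact hf'.norm.integrableOn_Icc.mono_set Ioc_subset_Icc_self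
    · exact .of_forall fun y => norm_nonneg _
    · refine LE.le.eventuallyLE ?_
      rw [← uIoc_of_le hab]
      exact uIoc_subset_uIoc_of_uIcc_subset_uIcc
        (uIcc_subset_uIcc (Icc_subset_uIcc hx₀) (Icc_subset_uIcc hx))
  calc f x ^ 2 = ‖f x‖ ^ 2 := by rw [Real.norm_eq_abs, sq_abs]
    _ ≤ (∫ y in a..b, ‖f' y‖) ^ 2 := pow_le_pow_left₀ (norm_nonneg _) habs 2
    _ ≤ (b - a) * ∫ y in a..b, ‖f' y‖ ^ 2 := sq_integral_le_mul_integral_sq hf'.norm hab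
    _ = (b - a) * ∫ y in a..b, f' y ^ 2 := by simp_rw [Real.norm_eq_abs, sq_abs]

theorem integral_sq_le_of_integral_eq_zero {f f' : ℝ → ℝ} (hf : ∀ x, HasDerivAt f (f' x) x)
    (hf' : Continuous f') {a b : ℝ} (hab : a ≤ b) (hmean : ∫ x in a..b, f x = 0) :
    ∫ x in a..b, f x ^ 2 ≤ (b - a) ^ 2 * ∫ x in a..b, f' x ^ 2 := by
  rcases hab.eq_or_lt with rfl | hab
  · simp
  have hfc : Continuous f := continuous_iff_continuousAt.2 fun x => (hf x).continuousAt
  obtain ⟨x₀, hx₀, hfx₀⟩ := exists_eq_interval_average hab.ne hfc.continuousOn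
  rw [interval_average_eq_div, hmean, zero_div] at hfx₀
  have hx₀' : x₀ ∈ Icc a b := by
    rw [uIoo_of_le hab.le] at hx₀
    exact Ioo_subset_Icc_self hx₀
  calc ∫ x in a..b, f x ^ 2 ≤ ∫ _ in a..b, (b - a) * ∫ y in a..b, f' y ^ 2 :=
        integral_mono_on hab.le ((hfc.pow 2).intervalIntegrable _ _) intervalIntegrable_const
          fun x hx => sq_le_mul_integral_deriv_sq hf hf' hx₀' hx hfx₀
    _ = (b - a) ^ 2 * ∫ x in a..b, f' x ^ 2 := by
        rw [intervalIntegral.integral_const, smul_eq_mul]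
        ring

theorem abs_integral_mul_le {u v : ℝ → ℝ} (hu : Continuous u) (hv : Continuous v) {a b : ℝ}
    (hab : a ≤ b) :
    |∫ x in a..b, u x * v x| ≤ ((∫ x in a..b, u x ^ 2) + ∫ x in a..b, v x ^ 2) / 2 := by
  have hpt (x : ℝ) : |u x * v x| ≤ (u x ^ 2 + v x ^ 2) / 2 := by
    rw [abs_mul, ← sq_abs (u x), ← sq_abs (v x)]
    linarith [two_mul_le_add_sq |u x| |v x|]
  rw [← integral_add ((hu.fun_pow 2).intervalIntegrable _ _)
    ((hv.fun_pow 2).intervalIntegrable _ _), ← intervalIntegral.integral_div]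
  exact (abs_integral_le_integral_abs hab).trans <| integral_mono_on hab
    ((hu.mul hv).abs.intervalIntegrable _ _)
    (((hu.pow 2).add (hv.pow 2)).div_const 2 |>.intervalIntegrable _ _) fun x _ => hpt x

noncomputable def energy (ψ : ℝ → ℝ → ℝ) (T t : ℝ) : ℝ :=
  (1 / 2) * ∫ x in (0:ℝ)..T, (pt ψ t x) ^ 2 + (px ψ t x) ^ 2

section Energy

variable {ψ : ℝ → ℝ → ℝ}

theorem hasDerivAt_integral_pt_sq_add_px_sq (hψ : ContDiff ℝ 2 (uncurry ψ)) (a b t : ℝ) :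
    HasDerivAt (fun s => ∫ x in a..b, (pt ψ s x) ^ 2 + (px ψ s x) ^ 2)
      (∫ x in a..b, 2 * (pt ψ t x * pt (pt ψ) t x + px ψ t x * px (pt ψ) t x)) t := by
  have hψ' : ContDiff ℝ (1 + 1) (uncurry ψ) := hψ
  have hpt := hψ'.uncurry_pt
  have hpx := hψ'.uncurry_px
  have h := hasDerivAt_intervalIntegral_of_contDiff
    (F := fun s x => (pt ψ s x) ^ 2 + (px ψ s x) ^ 2) ((hpt.pow 2).add (hpx.pow 2)) a b t
  convert h using 3 with x
  have hx := ((hasDerivAt_pt (hpt.differentiable one_ne_zero) t x).fun_pow 2).fun_add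
    ((hasDerivAt_pt (hpx.differentiable one_ne_zero) t x).fun_pow 2)
  rw [← pt_px_eq_px_pt hψ]
  exact (hx.deriv.trans (by ring)).symm

theorem hasDerivAt_energy (hψ : ContDiff ℝ 2 (uncurry ψ)) {T : ℝ} (hper : ∀ t, Periodic (ψ t) T)
    (t : ℝ) :
    HasDerivAt (energy ψ T) (∫ x in 0..T, pt ψ t x * (pt (pt ψ) t x - px (px ψ) t x)) t := by
  have hψ' : ContDiff ℝ (1 + 1) (uncurry ψ) := hψ
  have hpt := hψ'.uncurry_pt
  have hpx := hψ'.uncurry_px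
  have hcont {g : ℝ → ℝ → ℝ} (hg : ContDiff ℝ 0 (uncurry g)) : Continuous (g t) :=
    hg.continuous.uncurry_left t
  have hibp : ∫ x in 0..T, px ψ t x * px (pt ψ) t x = -∫ x in 0..T, px (px ψ) t x * pt ψ t x :=
    integral_mul_deriv_eq_neg_of_periodic (hper t).deriv (periodic_pt hper t)
      (hasDerivAt_px (hpx.differentiable one_ne_zero) t)
      (hasDerivAt_px (hpt.differentiable one_ne_zero) t)
      (hcont (hpx.uncurry_px (n := 0))) (hcont (hpt.uncurry_px (n := 0)))
  have hP : IntervalIntegrable (fun x => pt ψ t x * pt (pt ψ) t x) volume 0 T :=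
    ((hcont hpt.of_succ).mul (hcont (hpt.uncurry_pt (n := 0)))).intervalIntegrable _ _
  have hQ : IntervalIntegrable (fun x => px ψ t x * px (pt ψ) t x) volume 0 T :=
    ((hcont hpx.of_succ).mul (hcont (hpt.uncurry_px (n := 0)))).intervalIntegrable _ _
  have hR : IntervalIntegrable (fun x => px (px ψ) t x * pt ψ t x) volume 0 T :=
    ((hcont (hpx.uncurry_px (n := 0))).mul (hcont hpt.of_succ)).intervalIntegrable _ _
  refine ((hasDerivAt_integral_pt_sq_add_px_sq hψ 0 T t).const_mul (1 / 2)).congr_deriv ?_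
  rw [intervalIntegral.integral_const_mul, integral_add hP hQ, hibp, ← sub_eq_add_neg,
    ← integral_sub hP hR, one_div, inv_mul_cancel_left₀ two_ne_zero]
  congr 1 with x
  ring

theorem energy_eq (hψ : ContDiff ℝ 1 (uncurry ψ)) (T t : ℝ) :
    energy ψ T t = ((∫ x in 0..T, pt ψ t x ^ 2) + ∫ x in 0..T, px ψ t x ^ 2) / 2 := by
  have hpt := (ContDiff.uncurry_pt (n := 0) hψ).continuous.uncurry_left t
  have hpx := (ContDiff.uncurry_px (n := 0) hψ).continuous.uncurry_left t
  rw [energy, integral_add ((hpt.fun_pow 2).intervalIntegrable _ _)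
    ((hpx.fun_pow 2).intervalIntegrable _ _)]
  ring

theorem hasDerivAt_energy_of_wave (hψ : ContDiff ℝ 2 (uncurry ψ)) {T : ℝ}
    (hper : ∀ t, Periodic (ψ t) T) {t c : ℝ}
    (hwave : ∀ x, pt (pt ψ) t x - px (px ψ) t x = c * ψ t x) :
    HasDerivAt (energy ψ T) (c * ∫ x in 0..T, pt ψ t x * ψ t x) t := by
  convert hasDerivAt_energy hψ hper t using 1
  rw [← intervalIntegral.integral_const_mul]
  congr 1 with x
  rw [hwave]
  ring

end Energy

theorem energy_inequality_general
    (ψ : ℝ → ℝ → ℝ) (t₀ : ℝ)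
    (hC2 : ContDiff ℝ 2 (fun p : ℝ × ℝ => ψ p.1 p.2))
    (hper : ∀ t x : ℝ, ψ t (x + 2 * π) = ψ t x)
    (heq : ∀ t : ℝ, t₀ ≤ t → ∀ x : ℝ,
      pt (pt ψ) t x - px (px ψ) t x = -ψ t x / (4 * t ^ 2))
    (hmean : ∀ t : ℝ, t₀ ≤ t → ∫ x in (0:ℝ)..(2 * π), ψ t x = 0) :
    ∀ t : ℝ, t₀ ≤ t →
      deriv (fun s => (1 / 2) * ∫ x in (0:ℝ)..(2 * π), (pt ψ s x) ^ 2 + (px ψ s x) ^ 2) t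
        ≤ (π ^ 2 / t ^ 2) *
          ((1 / 2) * ∫ x in (0:ℝ)..(2 * π), (pt ψ t x) ^ 2 + (px ψ t x) ^ 2) := by
  intro t ht
  have h2π : 0 ≤ 2 * π := by positivity
  have hψ : ContDiff ℝ (1 + 1) (uncurry ψ) := hC2
  have hderiv := hasDerivAt_energy_of_wave hC2 hper (c := -1 / (4 * t ^ 2)) fun x => by
    rw [heq t ht x]
    ring
  have hAM := abs_integral_mul_le (hψ.uncurry_pt.continuous.uncurry_left t)
    (hC2.continuous.uncurry_left t) h2π
  have hpoincare := integral_sq_le_of_integral_eq_zero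
    (hasDerivAt_px (hψ.differentiable (by simp)) t) (hψ.uncurry_px.continuous.uncurry_left t) h2π
    (hmean t ht)
  rw [sub_zero] at hpoincare
  have hA : 0 ≤ ∫ x in 0..2 * π, pt ψ t x ^ 2 := integral_nonneg h2π fun x _ => sq_nonneg _
  have hπ : 1 ≤ 4 * π ^ 2 := by nlinarith [pi_gt_three]
  change deriv (energy ψ (2 * π)) t ≤ π ^ 2 / t ^ 2 * energy ψ (2 * π) t
  rw [hderiv.deriv, energy_eq hψ.of_succ]
  calc -1 / (4 * t ^ 2) * ∫ x in 0..2 * π, pt ψ t x * ψ t x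
      ≤ 1 / (4 * t ^ 2) * |∫ x in 0..2 * π, pt ψ t x * ψ t x| := by
        rw [neg_div, neg_mul, ← mul_neg]
        gcongr
        exact neg_le_abs _
    _ ≤ 1 / (4 * t ^ 2) * (4 * π ^ 2 * (∫ x in 0..2 * π, pt ψ t x ^ 2)
          + 4 * π ^ 2 * ∫ x in 0..2 * π, px ψ t x ^ 2) / 2 := by
        rw [mul_div_assoc]
        gcongr
        nlinarith
    _ = _ := by ring

/-- The energy of a mean-zero, spatially periodic solution of
`ψ_tt - ψ_xx = -ψ/(4t²)` satisfies the differential inequality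
`ε'(t) ≤ (π²/t²) ε(t)`. -/
theorem energy_inequality
    (ψ : ℝ → ℝ → ℝ) (t₀ : ℝ) (ht₀ : 0 < t₀)
    (hC2 : ContDiff ℝ 2 (fun p : ℝ × ℝ => ψ p.1 p.2))
    (hper : ∀ t x : ℝ, ψ t (x + 2 * π) = ψ t x)
    (heq : ∀ t : ℝ, t₀ ≤ t → ∀ x : ℝ,
      pt (pt ψ) t x - px (px ψ) t x = -ψ t x / (4 * t ^ 2))
    (hmean : ∀ t : ℝ, t₀ ≤ t → ∫ x in (0:ℝ)..(2 * π), ψ t x = 0) :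
    ∀ t : ℝ, t₀ ≤ t →
      deriv (fun s => (1 / 2) * ∫ x in (0:ℝ)..(2 * π), (pt ψ s x) ^ 2 + (px ψ s x) ^ 2) t
        ≤ (π ^ 2 / t ^ 2) *
          ((1 / 2) * ∫ x in (0:ℝ)..(2 * π), (pt ψ t x) ^ 2 + (px ψ t x) ^ 2) :=
  energy_inequality_general ψ t₀ hC2 hper heq hmean
end

section
/- In the setting of the decomposition ψ = ν + ω with ν(u,v) = F(u) + G(v) constructed from a bounded mean-zero solution ψ of ψ_uv = -ψ/(4(u+v)²): the function F'(u) := lim_{v→∞} ψ_u(u,v) is 2π-periodic and has zero mean over any period: ∫_{u₀}^{u₀+2π} F'(u) du = 0. -/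
/-!
Since `∂_v ψ_u = -ψ / (4(u+v)²)` and `ψ` is bounded, `ψ_u(u, v)` converges to `F'(u)` at rate
`C / (4(u+v))`, uniformly for `u ≥ u₀`. Periodicity of `F'` is inherited from
`ψ_u(u+2π, v) = ψ_u(u, v+2π)`. Integrating `ψ_u` over a period gives
`ψ(u₀+2π, v) - ψ(u₀, v) = ψ(u₀, v+2π) - ψ(u₀, v)`, so these increments tend to `∫ F'` as
`v → ∞`; summing them along `v = 2πn`, the boundedness of `ψ` forces `∫ F' = 0`.
-/

open Real Set Filter

/-- Partial derivative in the first null coordinate `u`. -/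
noncomputable def pu (f : ℝ → ℝ → ℝ) : ℝ → ℝ → ℝ := fun u v => deriv (fun u' => f u' v) u

open Topology Function

lemma eq_zero_of_tendsto_sub_of_abs_le {φ : ℕ → ℝ} {A C : ℝ} (hb : ∀ᶠ n in atTop, |φ n| ≤ C)
    (h : Tendsto (fun n => φ (n + 1) - φ n) atTop (𝓝 A)) : A = 0 := by
  have hcesaro : Tendsto (fun n : ℕ => (φ n - φ 0) * (n : ℝ)⁻¹) atTop (𝓝 A) := by
    simpa only [Finset.sum_range_sub, mul_comm] using h.cesaro
  have hzero : Tendsto (fun n : ℕ => (φ n - φ 0) * (n : ℝ)⁻¹) atTop (𝓝 0) :=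
    bdd_le_mul_tendsto_zero' (C + |φ 0|) (hb.mono fun n hn => (abs_sub _ _).trans (by linarith))
      (tendsto_inv_atTop_zero.comp tendsto_natCast_atTop_atTop)
  exact tendsto_nhds_unique hcesaro hzero

lemma eq_zero_of_tendsto_sub_comp_add_const {h : ℝ → ℝ} {p A C : ℝ} (hp : 0 < p)
    (hb : ∀ᶠ v in atTop, |h v| ≤ C) (hA : Tendsto (fun v => h (v + p) - h v) atTop (𝓝 A)) :
    A = 0 := by
  have hseq : Tendsto (fun n : ℕ => n * p) atTop atTop :=
    tendsto_natCast_atTop_atTop.atTop_mul_const hp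
  refine eq_zero_of_tendsto_sub_of_abs_le (φ := fun n => h (n * p)) (hseq.eventually hb) ?_
  simpa only [comp_def, Nat.cast_add, Nat.cast_one, add_mul, one_mul] using hA.comp hseq

lemma abs_sub_le_of_abs_deriv_le_div_sq {f f' : ℝ → ℝ} {c K v w : ℝ}
    (hf : ∀ s, 0 < c + s → HasDerivAt f (f' s) s)
    (hf' : ∀ s, 0 < c + s → |f' s| ≤ K / (c + s) ^ 2) (hv : 0 < c + v) (hvw : v ≤ w) :
    |f w - f v| ≤ K / (c + v) - K / (c + w) := by
  have hpos : ∀ s ∈ Icc v w, 0 < c + s := fun s hs => by linarith [hs.1]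
  have hB : ∀ s ∈ Icc v w,
      HasDerivAt (fun s => K / (c + v) - K / (c + s)) (K / (c + s) ^ 2) s := by
    intro s hs
    have := ((hasDerivAt_const s K).div ((hasDerivAt_id s).const_add c) (hpos s hs).ne').const_sub
      (K / (c + v))
    exact this.congr_deriv (by simp only [id]; ring)
  refine image_norm_le_of_norm_deriv_right_le_deriv_boundary' (f := fun s => f s - f v)
    (f' := f') (a := v) (b := w) (fun s hs => ?_) (fun s hs => ?_) (by simp)
    (fun s hs => (hB s hs).continuousAt.continuousWithinAt)
    (fun s hs => (hB s (Ico_subset_Icc_self hs)).hasDerivWithinAt)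
    (fun s hs => hf' s (hpos s (Ico_subset_Icc_self hs))) ⟨hvw, le_rfl⟩
  · exact ((hf s (hpos s hs)).continuousAt.sub continuousAt_const).continuousWithinAt
  · simpa using ((hf s (hpos s (Ico_subset_Icc_self hs))).sub_const (f v)).hasDerivWithinAt

lemma abs_sub_le_of_abs_deriv_le_div_sq_of_tendsto {f f' : ℝ → ℝ} {c K L v : ℝ} (hK : 0 ≤ K)
    (hf : ∀ s, 0 < c + s → HasDerivAt f (f' s) s)
    (hf' : ∀ s, 0 < c + s → |f' s| ≤ K / (c + s) ^ 2) (hL : Tendsto f atTop (𝓝 L))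
    (hv : 0 < c + v) : |f v - L| ≤ K / (c + v) := by
  have hbound : ∀ᶠ w in atTop, |f w - f v| ≤ K / (c + v) :=
    (eventually_ge_atTop v).mono fun w hvw =>
      (abs_sub_le_of_abs_deriv_le_div_sq hf hf' hv hvw).trans
        (sub_le_self _ (div_nonneg hK (by linarith)))
  simpa only [abs_sub_comm] using le_of_tendsto ((hL.sub_const (f v)).abs) hbound

lemma tendstoUniformlyOn_Ici_of_abs_sub_le {g : ℝ → ℝ → ℝ} {G : ℝ → ℝ} {K : ℝ} (hK : 0 ≤ K)
    (hg : ∀ u v, 0 < u + v → |g u v - G u| ≤ K / (u + v)) (a : ℝ) :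
    TendstoUniformlyOn (fun v u => g u v) G atTop (Ici a) := by
  have hK0 : Tendsto (fun v => K / (a + v)) atTop (𝓝 0) :=
    tendsto_const_nhds.div_atTop (tendsto_atTop_add_const_left _ a tendsto_id)
  rw [Metric.tendstoUniformlyOn_iff]
  intro ε hε
  filter_upwards [hK0.eventually (gt_mem_nhds hε), eventually_gt_atTop (-a)] with v hvε hva u hu
  rw [dist_comm, Real.dist_eq]
  calc |g u v - G u| ≤ K / (u + v) := hg u v (by linarith [mem_Ici.1 hu])
    _ ≤ K / (a + v) := div_le_div_of_nonneg_left hK (by linarith) (by linarith [mem_Ici.1 hu])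
    _ < ε := hvε

lemma apply_add_eq_apply_add_of_invariant {f : ℝ → ℝ → ℝ} {p : ℝ}
    (hf : ∀ u v, f (u + p) (v - p) = f u v) (u v : ℝ) : f (u + p) v = f u (v + p) := by
  simpa using hf u (v + p)

lemma pu_add_eq_pu_add_of_invariant {f : ℝ → ℝ → ℝ} {p : ℝ}
    (hf : ∀ u v, f (u + p) (v - p) = f u v) (u v : ℝ) : pu f (u + p) v = pu f u (v + p) := by
  have hshift : (fun u' => f (u' + p) v) = fun u' => f u' (v + p) :=
    funext fun u' => apply_add_eq_apply_add_of_invariant hf u' v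
  simp only [pu]
  rw [← deriv_comp_add_const, hshift]

lemma hasDerivAt_partial_fst {f : ℝ → ℝ → ℝ} {u v : ℝ}
    (hf : DifferentiableAt ℝ (uncurry f) (u, v)) :
    HasDerivAt (fun u' => f u' v) (fderiv ℝ (uncurry f) (u, v) (1, 0)) u :=
  (hf.hasFDerivAt.comp_hasDerivAt u ((hasDerivAt_id u).prodMk (hasDerivAt_const u v)) :)

lemma hasDerivAt_pu {f : ℝ → ℝ → ℝ} (hf : Differentiable ℝ (uncurry f)) (u v : ℝ) :
    HasDerivAt (fun u' => f u' v) (pu f u v) u :=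
  (hasDerivAt_partial_fst (hf (u, v))).differentiableAt.hasDerivAt

lemma contDiff_uncurry_pu {f : ℝ → ℝ → ℝ} (hf : ContDiff ℝ 2 (uncurry f)) :
    ContDiff ℝ 1 (uncurry (pu f)) := by
  have hpu : uncurry (pu f) = fun p => fderiv ℝ (uncurry f) p (1, 0) := by
    ext ⟨u, v⟩
    exact (hasDerivAt_partial_fst (hf.differentiable two_ne_zero (u, v))).deriv
  rw [hpu]
  exact (ContinuousLinearMap.apply ℝ ℝ ((1 : ℝ), (0 : ℝ))).contDiff.comp
    (hf.fderiv_right le_rfl)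

lemma abs_pu_sub_le {ψ : ℝ → ℝ → ℝ} {F' : ℝ → ℝ} {C u v : ℝ} (hC : 0 ≤ C)
    (hψ : ContDiff ℝ 2 (uncurry ψ)) (hbd : ∀ u v : ℝ, 0 < u + v → |ψ u v| ≤ C)
    (heq : ∀ u v : ℝ, 0 < u + v → deriv (fun v' => pu ψ u v') v = -ψ u v / (4 * (u + v) ^ 2))
    (hF' : Tendsto (fun v => pu ψ u v) atTop (𝓝 (F' u))) (huv : 0 < u + v) :
    |pu ψ u v - F' u| ≤ C / 4 / (u + v) := by
  refine abs_sub_le_of_abs_deriv_le_div_sq_of_tendsto (f' := fun s => -ψ u s / (4 * (u + s) ^ 2))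
    (by positivity) (fun s hs => ?_) (fun s hs => ?_) hF' huv
  · rw [← heq u s hs]
    exact (((contDiff_uncurry_pu hψ).differentiable one_ne_zero).comp
      ((differentiable_const u).prodMk differentiable_id) s).hasDerivAt
  · rw [abs_div, abs_neg, abs_of_pos (by positivity : (0:ℝ) < 4 * (u + s) ^ 2), div_div]
    gcongr
    exact hbd u s hs

theorem Fprime_periodic_mean_zero_general
    (ψ : ℝ → ℝ → ℝ) (C : ℝ)
    (hC2 : ContDiff ℝ 2 (fun p : ℝ × ℝ => ψ p.1 p.2))
    (hper : ∀ u v : ℝ, ψ (u + 2 * π) (v - 2 * π) = ψ u v)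
    (hbd : ∀ u v : ℝ, 0 < u + v → |ψ u v| ≤ C)
    (heq : ∀ u v : ℝ, 0 < u + v →
      deriv (fun v' => pu ψ u v') v = -ψ u v / (4 * (u + v) ^ 2))
    (F' : ℝ → ℝ)
    (hF' : ∀ u : ℝ, Tendsto (fun v => pu ψ u v) atTop (nhds (F' u))) :
    (∀ u : ℝ, F' (u + 2 * π) = F' u) ∧
    ∀ u₀ : ℝ, ∫ u in u₀..(u₀ + 2 * π), F' u = 0 := by
  have hC : 0 ≤ C := (abs_nonneg _).trans (hbd 1 1 (by norm_num))
  have htail u v (huv : 0 < u + v) := abs_pu_sub_le hC hC2 hbd heq (hF' u) huv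
  have hcont v : Continuous fun u => pu ψ u v :=
    (contDiff_uncurry_pu hC2).continuous.comp (continuous_id.prodMk continuous_const)
  refine ⟨fun u => tendsto_nhds_unique (hF' (u + 2 * π)) ?_, fun u₀ => ?_⟩
  · simpa only [pu_add_eq_pu_add_of_invariant hper, comp_def, id] using
      (hF' u).comp (tendsto_atTop_add_const_right _ _ tendsto_id)
  have hftc v : ∫ u in u₀..(u₀ + 2 * π), pu ψ u v = ψ u₀ (v + 2 * π) - ψ u₀ v := by
    rw [intervalIntegral.integral_eq_sub_of_hasDerivAt
      (fun u _ => hasDerivAt_pu (hC2.differentiable two_ne_zero) u v)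
      ((hcont v).intervalIntegrable _ _), apply_add_eq_apply_add_of_invariant hper]
  have hperiod : uIcc u₀ (u₀ + 2 * π) ⊆ Ici u₀ := by
    rw [uIcc_of_le (by linarith [pi_pos])]
    exact Icc_subset_Ici_self
  have hlim : Tendsto (fun v => ∫ u in u₀..(u₀ + 2 * π), pu ψ u v) atTop
      (𝓝 (∫ u in u₀..(u₀ + 2 * π), F' u)) :=
    ((tendstoUniformlyOn_Ici_of_abs_sub_le (by positivity) htail u₀).mono hperiod
      ).tendsto_intervalIntegral_of_continuousOn (.of_forall fun v => (hcont v).continuousOn)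
  simp only [hftc] at hlim
  exact eq_zero_of_tendsto_sub_comp_add_const two_pi_pos
    ((eventually_gt_atTop (-u₀)).mono fun v hv => hbd u₀ v (by linarith)) hlim

/-- In null coordinates, for a bounded, spatially periodic, mean-zero solution of
`ψ_uv = -ψ/(4(u+v)²)`, the limit function `F'(u) = lim_{v→∞} ψ_u(u,v)` is 2π-periodic
with zero mean over any period. -/
theorem Fprime_periodic_mean_zero
    (ψ : ℝ → ℝ → ℝ) (C : ℝ)
    (hC2 : ContDiff ℝ 2 (fun p : ℝ × ℝ => ψ p.1 p.2))
    (hper : ∀ u v : ℝ, ψ (u + 2 * π) (v - 2 * π) = ψ u v)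
    (hbd : ∀ u v : ℝ, 0 < u + v → |ψ u v| ≤ C)
    (heq : ∀ u v : ℝ, 0 < u + v →
      deriv (fun v' => pu ψ u v') v = -ψ u v / (4 * (u + v) ^ 2))
    (hmean : ∀ t : ℝ, 0 < t → ∫ x in (0:ℝ)..(2 * π), ψ (t + x) (t - x) = 0)
    (F' : ℝ → ℝ)
    (hF' : ∀ u : ℝ, Tendsto (fun v => pu ψ u v) atTop (nhds (F' u))) :
    (∀ u : ℝ, F' (u + 2 * π) = F' u) ∧
    ∀ u₀ : ℝ, ∫ u in u₀..(u₀ + 2 * π), F' u = 0 :=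
  Fprime_periodic_mean_zero_general ψ C hC2 hper hbd heq F' hF'
end

section
/- For a bounded, mean-zero, 2π-periodic C² solution ψ of ψ_tt - ψ_xx = -ψ/(4t²) with associated free-wave part ν and remainder ω = ψ - ν, the following are equivalent: (i) ψ ≡ 0; (ii) ν ≡ 0; (iii) ω ≡ 0. -/
/-!
Along a characteristic `x = c + e t` (`e = ±1`) the quantity `u_t - e u_x` changes at the rate
`□u = u_tt - u_xx`. So if `u`, `u_t`, `u_x` decay like `1/t` and `|□u| ≤ A/(4t³)`, integrating
from `t` to `∞` gives `|u_t ∓ u_x| ≤ A/(8t²)`, hence `|u_t| ≤ A/(8t²)`, and integrating once more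
in time, `|u| ≤ A/(8t)`.

If `ψ ≡ 0`, the bounds on `ω` make `ν` decay, and `□ν = 0` gives `ν ≡ 0` at once. If `ν ≡ 0`,
they make `ψ` decay, and since `|□ψ| = |ψ|/(4t²)`, each round turns `|ψ| ≤ A/t` into
`|ψ| ≤ A/(8t)`, so `ψ ≡ 0`. If `ω ≡ 0`, then `□ψ = □ν = 0`, which forces `ψ = -4t²□ψ = 0`.
The line `t = t₀` itself follows by continuity.
-/

open Real Set

open Filter Topology Function

theorem abs_le_of_abs_deriv_le_of_tendsto {g g' φ φ' : ℝ → ℝ} {a L : ℝ}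
    (hg : ∀ r ≥ a, HasDerivAt g (g' r) r) (hφ : ∀ r ≥ a, HasDerivAt φ (φ' r) r)
    (hle : ∀ r ≥ a, |g' r| ≤ φ' r) (hg0 : Tendsto g atTop (𝓝 0))
    (hφL : Tendsto φ atTop (𝓝 L)) :
    |g a| ≤ L - φ a := by
  have hfence : ∀ b ≥ a, |g b - g a| ≤ φ b - φ a := fun b hb =>
    image_norm_le_of_norm_deriv_right_le_deriv_boundary' (f := fun r => g r - g a)
      (fun r hr => ((hg r hr.1).sub_const _).continuousAt.continuousWithinAt)
      (fun r hr => ((hg r hr.1).sub_const _).hasDerivWithinAt)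
      (by simp) (fun r hr => (hφ r hr.1).sub_const _ |>.continuousAt.continuousWithinAt)
      (fun r hr => ((hφ r hr.1).sub_const _).hasDerivWithinAt)
      (fun r hr => hle r hr.1) ⟨hb, le_rfl⟩
  have hlim : Tendsto (fun b => |g b - g a|) atTop (𝓝 |0 - g a|) :=
    (hg0.sub_const _).abs
  rw [zero_sub, abs_neg] at hlim
  exact le_of_tendsto_of_tendsto hlim (hφL.sub_const _)
    (eventually_ge_atTop a |>.mono hfence)

section PartialDerivatives

variable {u : ℝ → ℝ → ℝ} {s : Set (ℝ × ℝ)} {t x : ℝ}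

theorem hasDerivAt_pt_of_differentiableAt (h : DifferentiableAt ℝ (uncurry u) (t, x)) :
    HasDerivAt (fun r => u r x) (fderiv ℝ (uncurry u) (t, x) (1, 0)) t :=
  (h.hasFDerivAt.comp_hasDerivAt t ((hasDerivAt_id t).prodMk (hasDerivAt_const t x)) :)

theorem hasDerivAt_px_of_differentiableAt (h : DifferentiableAt ℝ (uncurry u) (t, x)) :
    HasDerivAt (fun y => u t y) (fderiv ℝ (uncurry u) (t, x) (0, 1)) x :=
  (h.hasFDerivAt.comp_hasDerivAt x ((hasDerivAt_const x t).prodMk (hasDerivAt_id x)) :)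

theorem hasDerivAt_fderiv_apply_comp {E F : Type*} [NormedAddCommGroup E] [NormedSpace ℝ E]
    [NormedAddCommGroup F] [NormedSpace ℝ F] {f : E → F} {γ : ℝ → E} {γ' w : E} {r : ℝ}
    (hγ : HasDerivAt γ γ' r) (hf : ContDiffAt ℝ 2 f (γ r)) :
    HasDerivAt (fun r => fderiv ℝ f (γ r) w) (fderiv ℝ (fderiv ℝ f) (γ r) γ' w) r := by
  have hf' := (hf.fderiv_right (m := 1) le_rfl).differentiableAt one_ne_zero
  simpa using (hf'.hasFDerivAt.comp_hasDerivAt r hγ).clm_apply (hasDerivAt_const r w)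

theorem pt_eq_fderiv (h : DifferentiableAt ℝ (uncurry u) (t, x)) :
    pt u t x = fderiv ℝ (uncurry u) (t, x) (1, 0) :=
  (hasDerivAt_pt_of_differentiableAt h).deriv

theorem px_eq_fderiv (h : DifferentiableAt ℝ (uncurry u) (t, x)) :
    px u t x = fderiv ℝ (uncurry u) (t, x) (0, 1) :=
  (hasDerivAt_px_of_differentiableAt h).deriv

theorem ContDiffOn.differentiableAt_of_isOpen {f : ℝ × ℝ → ℝ} (hs : IsOpen s)
    (hf : ContDiffOn ℝ 2 f s) {p : ℝ × ℝ} (hp : p ∈ s) : DifferentiableAt ℝ f p :=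
  (hf.differentiableOn two_ne_zero).differentiableAt (hs.mem_nhds hp)

theorem pt_pt_eq_fderiv_fderiv (hs : IsOpen s) (hu : ContDiffOn ℝ 2 (uncurry u) s)
    (hp : (t, x) ∈ s) :
    pt (pt u) t x = fderiv ℝ (fderiv ℝ (uncurry u)) (t, x) (1, 0) (1, 0) := by
  have hγ : HasDerivAt (fun r => ((r, x) : ℝ × ℝ)) (1, 0) t :=
    (hasDerivAt_id t).prodMk (hasDerivAt_const t x)
  have hnear : ∀ᶠ r in 𝓝 t, (r, x) ∈ s := hγ.continuousAt.preimage_mem_nhds (hs.mem_nhds hp)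
  have hpt : (fun r => pt u r x) =ᶠ[𝓝 t] fun r => fderiv ℝ (uncurry u) (r, x) (1, 0) :=
    hnear.mono fun r hr => pt_eq_fderiv (hu.differentiableAt_of_isOpen hs hr)
  exact hpt.deriv_eq.trans (hasDerivAt_fderiv_apply_comp hγ (hu.contDiffAt (hs.mem_nhds hp))).deriv

theorem px_px_eq_fderiv_fderiv (hs : IsOpen s) (hu : ContDiffOn ℝ 2 (uncurry u) s)
    (hp : (t, x) ∈ s) :
    px (px u) t x = fderiv ℝ (fderiv ℝ (uncurry u)) (t, x) (0, 1) (0, 1) := by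
  have hγ : HasDerivAt (fun y => ((t, y) : ℝ × ℝ)) (0, 1) x :=
    (hasDerivAt_const x t).prodMk (hasDerivAt_id x)
  have hnear : ∀ᶠ y in 𝓝 x, (t, y) ∈ s := hγ.continuousAt.preimage_mem_nhds (hs.mem_nhds hp)
  have hpx : (fun y => px u t y) =ᶠ[𝓝 x] fun y => fderiv ℝ (uncurry u) (t, y) (0, 1) :=
    hnear.mono fun y hy => px_eq_fderiv (hu.differentiableAt_of_isOpen hs hy)
  exact hpx.deriv_eq.trans (hasDerivAt_fderiv_apply_comp hγ (hu.contDiffAt (hs.mem_nhds hp))).deriv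

theorem hasDerivAt_pt_sub_px_characteristic (hs : IsOpen s) (hu : ContDiffOn ℝ 2 (uncurry u) s)
    {c e r : ℝ} (he : e * e = 1) (hr : (r, c + e * r) ∈ s) :
    HasDerivAt (fun r => pt u r (c + e * r) - e * px u r (c + e * r))
      (pt (pt u) r (c + e * r) - px (px u) r (c + e * r)) r := by
  have hγ : HasDerivAt (fun r => ((r, c + e * r) : ℝ × ℝ)) (1, e) r := by
    simpa using (hasDerivAt_id r).prodMk (((hasDerivAt_id r).const_mul e).const_add c)
  have hnear : ∀ᶠ r' in 𝓝 r, (r', c + e * r') ∈ s :=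
    hγ.continuousAt.preimage_mem_nhds (hs.mem_nhds hr)
  have hC2 := hu.contDiffAt (hs.mem_nhds hr)
  have hderiv := (hasDerivAt_fderiv_apply_comp (w := (1, 0)) hγ hC2).sub
    ((hasDerivAt_fderiv_apply_comp (w := (0, 1)) hγ hC2).const_mul e)
  set D2 := fderiv ℝ (fderiv ℝ (uncurry u)) (r, c + e * r)
  have hsymm : D2 (1, 0) (0, 1) = D2 (0, 1) (1, 0) := (hC2.isSymmSndFDerivAt (by simp)).eq _ _
  have hval : D2 (1, e) (1, 0) - e * D2 (1, e) (0, 1) =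
      pt (pt u) r (c + e * r) - px (px u) r (c + e * r) := by
    rw [pt_pt_eq_fderiv_fderiv hs hu hr, px_px_eq_fderiv_fderiv hs hu hr,
      show ((1 : ℝ), e) = (1, 0) + e • (0, 1) by simp]
    simp only [map_add, map_smul, add_apply, smul_apply, smul_eq_mul]
    linear_combination (-D2 (0, 1) (0, 1)) * he - e * hsymm
  rw [← hval]
  refine hderiv.congr_of_eventuallyEq (hnear.mono fun r' hr' => ?_)
  have hd := hu.differentiableAt_of_isOpen hs hr'
  simp only [Pi.sub_apply, pt_eq_fderiv hd, px_eq_fderiv hd]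

end PartialDerivatives

section Decay

variable {u : ℝ → ℝ → ℝ} {τ C A : ℝ}

theorem abs_pt_sub_px_le (hτ : 0 ≤ τ) (hu : ContDiffOn ℝ 2 (uncurry u) (Ioi τ ×ˢ univ))
    (hdecay : ∀ t > τ, ∀ x, |pt u t x| ≤ C / t ∧ |px u t x| ≤ C / t)
    (hbox : ∀ t > τ, ∀ x, |pt (pt u) t x - px (px u) t x| ≤ A / (4 * t ^ 3))
    {e : ℝ} (he : e * e = 1) {t : ℝ} (ht : τ < t) (x : ℝ) :
    |pt u t x - e * px u t x| ≤ A / (8 * t ^ 2) := by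
  set c := x - e * t
  set g := fun r => pt u r (c + e * r) - e * px u r (c + e * r)
  have hg (r : ℝ) (hr : r ≥ t) :
      HasDerivAt g (pt (pt u) r (c + e * r) - px (px u) r (c + e * r)) r :=
    hasDerivAt_pt_sub_px_characteristic (isOpen_Ioi.prod isOpen_univ) hu he
      ⟨ht.trans_le hr, mem_univ _⟩
  have hφ (r : ℝ) (hr : r ≥ t) :
      HasDerivAt (fun r => -(A / 8) * (r ^ 2)⁻¹) (A / (4 * r ^ 3)) r := by
    have hr0 : r ≠ 0 := by linarith
    have hsq : HasDerivAt (fun r : ℝ => r ^ 2) (2 * r) r := by simpa using hasDerivAt_pow 2 r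
    exact ((hsq.inv (by positivity)).const_mul _).congr_deriv (by field_simp; ring)
  have he1 : |e| = 1 := by rcases mul_self_eq_one_iff.mp he with rfl | rfl <;> simp
  have hg0 : Tendsto g atTop (𝓝 0) := by
    have h2C : Tendsto (fun r : ℝ => 2 * (C / r)) atTop (𝓝 0) := by
      simpa using (tendsto_const_nhds.div_atTop tendsto_id).const_mul (2 : ℝ)
    refine squeeze_zero_norm' ?_ h2C
    filter_upwards [eventually_gt_atTop τ] with r hr
    obtain ⟨hpt, hpx⟩ := hdecay r hr (c + e * r)
    calc ‖g r‖ ≤ |pt u r (c + e * r)| + |e| * |px u r (c + e * r)| := by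
          rw [Real.norm_eq_abs, ← abs_mul]; exact abs_sub _ _
      _ ≤ 2 * (C / r) := by rw [he1]; linarith
  have hφ0 : Tendsto (fun r : ℝ => -(A / 8) * (r ^ 2)⁻¹) atTop (𝓝 0) := by
    simpa using (tendsto_inv_atTop_zero.comp (tendsto_pow_atTop two_ne_zero)).const_mul (-(A / 8))
  have key := abs_le_of_abs_deriv_le_of_tendsto hg hφ
    (fun r hr => hbox r (ht.trans_le hr) _) hg0 hφ0
  have hct : c + e * t = x := by ring
  simp only [g, hct] at key
  convert key using 1
  field_simp
  ring

theorem abs_pt_le (hτ : 0 ≤ τ) (hu : ContDiffOn ℝ 2 (uncurry u) (Ioi τ ×ˢ univ))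
    (hdecay : ∀ t > τ, ∀ x, |pt u t x| ≤ C / t ∧ |px u t x| ≤ C / t)
    (hbox : ∀ t > τ, ∀ x, |pt (pt u) t x - px (px u) t x| ≤ A / (4 * t ^ 3))
    {t : ℝ} (ht : τ < t) (x : ℝ) :
    |pt u t x| ≤ A / 8 / t ^ 2 := by
  have hplus := abs_le.mp (abs_pt_sub_px_le hτ hu hdecay hbox (e := 1) (by norm_num) ht x)
  have hminus := abs_le.mp (abs_pt_sub_px_le hτ hu hdecay hbox (e := -1) (by norm_num) ht x)
  rw [div_div, abs_le]
  constructor <;> linarith [hplus.1, hplus.2, hminus.1, hminus.2]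

theorem abs_le_of_abs_pt_le (hτ : 0 ≤ τ)
    (hdiff : ∀ t > τ, ∀ x, DifferentiableAt ℝ (fun r => u r x) t)
    (hdecay : ∀ t > τ, ∀ x, |u t x| ≤ C / t) {B : ℝ}
    (hpt : ∀ t > τ, ∀ x, |pt u t x| ≤ B / t ^ 2) {t : ℝ} (ht : τ < t) (x : ℝ) :
    |u t x| ≤ B / t := by
  have hφ (r : ℝ) (hr : r ≥ t) : HasDerivAt (fun r => -B * r⁻¹) (B / r ^ 2) r := by
    have hr0 : r ≠ 0 := by linarith
    exact ((hasDerivAt_inv hr0).const_mul _).congr_deriv (by ring)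
  have hu0 : Tendsto (fun r => u r x) atTop (𝓝 0) :=
    squeeze_zero_norm' (eventually_gt_atTop τ |>.mono fun r hr => hdecay r hr x)
      (tendsto_const_nhds.div_atTop tendsto_id)
  have hφ0 : Tendsto (fun r : ℝ => -B * r⁻¹) atTop (𝓝 0) := by
    simpa using tendsto_inv_atTop_zero.const_mul (-B)
  have key := abs_le_of_abs_deriv_le_of_tendsto
    (fun r hr => (hdiff r (ht.trans_le hr) x).hasDerivAt) hφ
    (fun r hr => hpt r (ht.trans_le hr) x) hu0 hφ0
  simpa [div_eq_mul_inv] using key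

theorem abs_le_of_abs_wave_le (hτ : 0 ≤ τ) (hu : ContDiffOn ℝ 2 (uncurry u) (Ioi τ ×ˢ univ))
    (hdecay : ∀ t > τ, ∀ x, |u t x| ≤ C / t ∧ |pt u t x| ≤ C / t ∧ |px u t x| ≤ C / t)
    (hbox : ∀ t > τ, ∀ x, |pt (pt u) t x - px (px u) t x| ≤ A / (4 * t ^ 3))
    {t : ℝ} (ht : τ < t) (x : ℝ) :
    |u t x| ≤ A / 8 / t := by
  have hdiff (t : ℝ) (ht : t > τ) (x : ℝ) : DifferentiableAt ℝ (fun r => u r x) t :=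
    (hasDerivAt_pt_of_differentiableAt <|
      hu.differentiableAt_of_isOpen (isOpen_Ioi.prod isOpen_univ) ⟨ht, mem_univ x⟩).differentiableAt
  exact abs_le_of_abs_pt_le hτ hdiff (fun t ht x => (hdecay t ht x).1)
    (fun _ ht => abs_pt_le hτ hu (fun t ht x => (hdecay t ht x).2) hbox ht) ht x

theorem eq_zero_of_abs_wave_le (hτ : 0 ≤ τ) (hu : ContDiffOn ℝ 2 (uncurry u) (Ioi τ ×ˢ univ))
    (hdecay : ∀ t > τ, ∀ x, |u t x| ≤ C / t ∧ |pt u t x| ≤ C / t ∧ |px u t x| ≤ C / t)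
    (hbox : ∀ t > τ, ∀ x, |pt (pt u) t x - px (px u) t x| ≤ |u t x| / (4 * t ^ 2))
    {t : ℝ} (ht : τ < t) (x : ℝ) :
    u t x = 0 := by
  have hiter (n : ℕ) : ∀ t > τ, ∀ x, |u t x| ≤ C / 8 ^ n / t := by
    induction n with
    | zero => simpa using fun t ht x => (hdecay t ht x).1
    | succ n ih =>
      intro t ht x
      have hbox' (t : ℝ) (ht : t > τ) (x : ℝ) :
          |pt (pt u) t x - px (px u) t x| ≤ C / 8 ^ n / (4 * t ^ 3) := by
        have ht0 : 0 < t := hτ.trans_lt ht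
        calc _ ≤ |u t x| / (4 * t ^ 2) := hbox t ht x
          _ ≤ C / 8 ^ n / t / (4 * t ^ 2) := by gcongr; exact ih t ht x
          _ = C / 8 ^ n / (4 * t ^ 3) := by field_simp
      simpa [pow_succ, div_div] using abs_le_of_abs_wave_le hτ hu hdecay hbox' ht x
  have hlim : Tendsto (fun n : ℕ => C / 8 ^ n / t) atTop (𝓝 0) := by
    simpa using (tendsto_const_nhds.div_atTop
      (tendsto_pow_atTop_atTop_of_one_lt (by norm_num : (1 : ℝ) < 8))).div_const t
  exact abs_nonpos_iff.mp (ge_of_tendsto' hlim fun n => hiter n t ht x)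

end Decay

section Locality

variable {u v : ℝ → ℝ → ℝ} {t₀ t x C : ℝ}

theorem pt_congr (h : ∀ r y, t₀ < r → u r y = v r y) (ht : t₀ < t) : pt u t x = pt v t x :=
  Filter.EventuallyEq.deriv_eq (eventually_gt_nhds ht |>.mono fun r hr => h r x hr)

theorem px_congr (h : ∀ y, u t y = v t y) : px u t x = px v t x := by
  simp only [px, funext h]

theorem pt_pt_sub_px_px_congr (h : ∀ r y, t₀ < r → u r y = v r y) (ht : t₀ < t) :
    pt (pt u) t x - px (px u) t x = pt (pt v) t x - px (px v) t x := by
  rw [pt_congr (fun r y hr => pt_congr h hr) ht, px_congr fun y => px_congr fun z => h t z ht]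

theorem eq_zero_of_forall_gt (hu : ContinuousOn (uncurry u) (Ici t₀ ×ˢ univ))
    (h : ∀ t x, t₀ < t → u t x = 0) : ∀ t x, t₀ ≤ t → u t x = 0 := by
  have hzero : EqOn (uncurry u) 0 (Ioi t₀ ×ˢ univ) := fun p hp => h p.1 p.2 hp.1
  have hclosure := hzero.of_subset_closure hu continuousOn_const
    (prod_mono Ioi_subset_Ici_self subset_rfl) (by rw [closure_prod_eq, closure_Ioi, closure_univ])
  exact fun t x ht => hclosure (show (t, x) ∈ Ici t₀ ×ˢ univ from ⟨ht, mem_univ x⟩)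

theorem decay_of_abs_sub_le (hω : ∀ t x, t₀ ≤ t →
      |u t x - v t x| ≤ C / t ∧ |pt u t x - pt v t x| ≤ C / t ∧ |px u t x - px v t x| ≤ C / t)
    (hv : ∀ t x, t₀ ≤ t → v t x = 0) :
    ∀ t > t₀, ∀ x, |u t x| ≤ C / t ∧ |pt u t x| ≤ C / t ∧ |px u t x| ≤ C / t := by
  intro t ht x
  have hpt : pt v t x = 0 :=
    (pt_congr (v := fun _ _ => 0) (fun r y hr => hv r y hr.le) ht).trans (by simp [pt])
  have hpx : px v t x = 0 :=
    (px_congr (v := fun _ _ => 0) (fun y => hv t y ht.le)).trans (by simp [px])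
  simpa [hv t x ht.le, hpt, hpx] using hω t x ht.le

end Locality

theorem psi_nu_omega_zero_equivalent_general
    (ψ ν : ℝ → ℝ → ℝ) (t₀ Cω : ℝ) (ht₀ : 0 < t₀)
    (hC2 : ContDiff ℝ 2 (fun p : ℝ × ℝ => ψ p.1 p.2))
    (heq : ∀ t : ℝ, 0 < t → ∀ x : ℝ,
      pt (pt ψ) t x - px (px ψ) t x = -ψ t x / (4 * t ^ 2))
    -- ν is the ψ-associated solution of the free wave equation,
    -- with remainder ω = ψ - ν:
    (hνC2 : ContDiffOn ℝ 2 (fun p : ℝ × ℝ => ν p.1 p.2) (Ici t₀ ×ˢ univ))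
    (hwave : ∀ t x : ℝ, t₀ ≤ t → pt (pt ν) t x = px (px ν) t x)
    (hω : ∀ t x : ℝ, t₀ ≤ t →
      |ψ t x - ν t x| ≤ Cω / t ∧ |pt ψ t x - pt ν t x| ≤ Cω / t ∧
      |px ψ t x - px ν t x| ≤ Cω / t) :
    ((∀ t x : ℝ, t₀ ≤ t → ψ t x = 0) ↔ (∀ t x : ℝ, t₀ ≤ t → ν t x = 0)) ∧
    ((∀ t x : ℝ, t₀ ≤ t → ψ t x = 0) ↔
      (∀ t x : ℝ, t₀ ≤ t → ψ t x - ν t x = 0)) := by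
  have hψ : ContDiffOn ℝ 2 (uncurry ψ) (Ioi t₀ ×ˢ univ) := hC2.contDiffOn
  have hν : ContDiffOn ℝ 2 (uncurry ν) (Ioi t₀ ×ˢ univ) :=
    hνC2.mono (prod_mono Ioi_subset_Ici_self subset_rfl)
  have hψbox : ∀ t > t₀, ∀ x, |pt (pt ψ) t x - px (px ψ) t x| ≤ |ψ t x| / (4 * t ^ 2) := by
    intro t ht x
    have ht0 : 0 < t := ht₀.trans ht
    rw [heq t ht0, abs_div, abs_neg, abs_of_pos (by positivity : (0 : ℝ) < 4 * t ^ 2)]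
  have hνbox : ∀ t > t₀, ∀ x, |pt (pt ν) t x - px (px ν) t x| ≤ |ν t x| / (4 * t ^ 2) := by
    intro t ht x
    rw [hwave t x ht.le, sub_self, abs_zero]
    positivity
  have hω' (t x : ℝ) (ht : t₀ ≤ t) := abs_sub_comm (ψ t x) (ν t x) ▸
    abs_sub_comm (pt ψ t x) (pt ν t x) ▸ abs_sub_comm (px ψ t x) (px ν t x) ▸ hω t x ht
  have ν_of_ψ (h : ∀ t x, t₀ ≤ t → ψ t x = 0) : ∀ t x, t₀ ≤ t → ν t x = 0 :=
    eq_zero_of_forall_gt hνC2.continuousOn fun t x ht =>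
      eq_zero_of_abs_wave_le ht₀.le hν (decay_of_abs_sub_le hω' h) hνbox ht x
  have ψ_of_ν (h : ∀ t x, t₀ ≤ t → ν t x = 0) : ∀ t x, t₀ ≤ t → ψ t x = 0 :=
    eq_zero_of_forall_gt hC2.continuous.continuousOn fun t x ht =>
      eq_zero_of_abs_wave_le ht₀.le hψ (decay_of_abs_sub_le hω h) hψbox ht x
  have ψ_of_ω (h : ∀ t x, t₀ ≤ t → ψ t x - ν t x = 0) : ∀ t x, t₀ ≤ t → ψ t x = 0 := by
    refine eq_zero_of_forall_gt hC2.continuous.continuousOn fun t x ht => ?_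
    have hbox := heq t (ht₀.trans ht) x
    rw [pt_pt_sub_px_px_congr (fun r y hr => sub_eq_zero.mp (h r y hr.le)) ht, hwave t x ht.le,
      sub_self, eq_comm, div_eq_zero_iff, neg_eq_zero] at hbox
    exact hbox.resolve_right (by have := ht₀.trans ht; positivity)
  exact ⟨⟨ν_of_ψ, ψ_of_ν⟩, fun h t x ht => by rw [h t x ht, ν_of_ψ h t x ht, sub_zero], ψ_of_ω⟩

/-- For a bounded mean-zero periodic solution `ψ` of `ψ_tt - ψ_xx = -ψ/(4t²)` with
associated free-wave part `ν` and remainder `ω = ψ - ν`, the following are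
equivalent: `ψ ≡ 0`, `ν ≡ 0`, `ω ≡ 0`. -/
theorem psi_nu_omega_zero_equivalent
    (ψ ν : ℝ → ℝ → ℝ) (t₀ C₀ Cω : ℝ) (ht₀ : 0 < t₀)
    (hC2 : ContDiff ℝ 2 (fun p : ℝ × ℝ => ψ p.1 p.2))
    (hper : ∀ t x : ℝ, ψ t (x + 2 * π) = ψ t x)
    (heq : ∀ t : ℝ, 0 < t → ∀ x : ℝ,
      pt (pt ψ) t x - px (px ψ) t x = -ψ t x / (4 * t ^ 2))
    (hmean : ∀ t : ℝ, 0 < t → ∫ x in (0:ℝ)..(2 * π), ψ t x = 0)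
    (hbd : ∀ t : ℝ, t₀ ≤ t → ∀ x : ℝ, |ψ t x| ≤ C₀)
    -- ν is the ψ-associated solution of the free wave equation,
    -- with remainder ω = ψ - ν:
    (hνC2 : ContDiffOn ℝ 2 (fun p : ℝ × ℝ => ν p.1 p.2) (Ici t₀ ×ˢ univ))
    (hwave : ∀ t x : ℝ, t₀ ≤ t → pt (pt ν) t x = px (px ν) t x)
    (hω : ∀ t x : ℝ, t₀ ≤ t →
      |ψ t x - ν t x| ≤ Cω / t ∧ |pt ψ t x - pt ν t x| ≤ Cω / t ∧
      |px ψ t x - px ν t x| ≤ Cω / t) :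
    ((∀ t x : ℝ, t₀ ≤ t → ψ t x = 0) ↔ (∀ t x : ℝ, t₀ ≤ t → ν t x = 0)) ∧
    ((∀ t x : ℝ, t₀ ≤ t → ψ t x = 0) ↔
      (∀ t x : ℝ, t₀ ≤ t → ψ t x - ν t x = 0)) :=
  psi_nu_omega_zero_equivalent_general ψ ν t₀ Cω ht₀ hC2 heq hνC2 hwave hω
end
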